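/- arXiv:2003.06367 — 4 statements merged into one kernel-verified Lean document; each statement's English description precedes it below -/
import Mathlib

section
/- Let K be a field of characteristic zero and let U = Σ_{n≥1} u_n t^n and V = Σ_{n≥1} v_n t^n be formal power series over K with u_1 ≠ 0 and v_1 ≠ 0. Then the differential equation U · (z')² = V ∘ z admits a unique nonzero solution z in t·K⟦t⟧. -/
open PowerSeries

/-- Composition `V ∘ z` of formal power series, valid when `z` has zero constant term. -/
noncomputable def PowerSeries.compSeries {K : Type*} [CommRing K] (V z : PowerSeries K) :
    PowerSeries K :=
  PowerSeries.mk fun n => ∑ k ∈ Finset.range (n + 1),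
    (PowerSeries.coeff k V) * (PowerSeries.coeff n (z ^ k))

/-!
Write `F z = U (z')² - V ∘ z` (`odeResidual`). If `z` and `w` have zero constant term, the same
linear coefficient `c`, and agree below degree `n ≥ 2`, then the degree-`n` coefficients of `F z`
and `F w` differ by `(2 n u₁ c - v₁) (z_n - w_n)`: only the term `v₁ z` of `V ∘ z` and the factor
`z' - w'` of `U (z' + w') (z' - w')` see `z_n`. Modulo `t²`, `F z = 0` says `z₁ (u₁ z₁ - v₁) = 0`.
For `z₁ = v₁ / u₁` the multiplier is `(2 n - 1) v₁`, nonzero in characteristic zero, so the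
coefficients of a solution are forced one at a time and can be chosen recursively; for `z₁ = 0` it
is `-v₁ ≠ 0`, so `0` is the only solution with that linear term.
-/

namespace PowerSeries

section CommRing

variable {R : Type*} [CommRing R]

theorem coeff_add_mul_of_X_pow_dvd {f g : R⟦X⟧} {m n : ℕ} (hf : X ^ m ∣ f) (hg : X ^ n ∣ g) :
    coeff (m + n) (f * g) = coeff m f * coeff n g := by
  obtain ⟨a, rfl⟩ := hf
  obtain ⟨b, rfl⟩ := hg
  rw [show X ^ m * a * (X ^ n * b) = X ^ (m + n) * (a * b) by ring]
  simp only [coeff_X_pow_mul', le_refl, if_true, Nat.sub_self, coeff_zero_eq_constantCoeff_apply,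
    map_mul]

theorem X_pow_succ_dvd_of_coeff_eq_zero {f : R⟦X⟧} {n : ℕ} (hf : X ^ n ∣ f)
    (hn : coeff n f = 0) : X ^ (n + 1) ∣ f := by
  rw [X_pow_dvd_iff] at hf ⊢
  intro m hm
  rcases Nat.lt_succ_iff_lt_or_eq.mp hm with hm | rfl
  exacts [hf m hm, hn]

theorem X_pow_dvd_derivative {f : R⟦X⟧} {n : ℕ} (h : X ^ (n + 1) ∣ f) :
    X ^ n ∣ d⁄dX R f := by
  rw [X_pow_dvd_iff] at h ⊢
  intro m hm
  rw [coeff_derivative, h (m + 1) (by omega), zero_mul]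

theorem X_pow_succ_dvd_pow_sub_pow {z w : R⟦X⟧} (hz : X ∣ z) (hw : X ∣ w) {n : ℕ}
    (h : X ^ n ∣ z - w) {k : ℕ} (hk : 2 ≤ k) : X ^ (n + 1) ∣ z ^ k - w ^ k := by
  obtain ⟨j, rfl⟩ := Nat.exists_eq_add_of_le' hk
  have hpow : X ^ n ∣ z ^ (j + 1) - w ^ (j + 1) := h.trans (sub_dvd_pow_sub_pow z w _)
  rw [show z ^ (j + 2) - w ^ (j + 2) = z * (z ^ (j + 1) - w ^ (j + 1)) + w ^ (j + 1) * (z - w)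
    by ring, pow_succ']
  exact dvd_add (mul_dvd_mul hz hpow) (mul_dvd_mul (dvd_pow hw j.succ_ne_zero) h)

theorem compSeries_zero (V : R⟦X⟧) : V.compSeries 0 = C (constantCoeff V) := by
  ext n
  rw [compSeries, coeff_mk, Finset.sum_eq_single 0]
  · simp [coeff_C]
  · intro k _ hk
    simp [zero_pow hk]
  · simp

theorem constantCoeff_compSeries (V z : R⟦X⟧) :
    constantCoeff (V.compSeries z) = constantCoeff V := by
  rw [← coeff_zero_eq_constantCoeff_apply, compSeries, coeff_mk]
  simp

theorem coeff_one_compSeries (V z : R⟦X⟧) : coeff 1 (V.compSeries z) = coeff 1 V * coeff 1 z := by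
  simp [compSeries, Finset.sum_range_succ]

theorem coeff_compSeries_sub {V z w : R⟦X⟧} (hz : X ∣ z) (hw : X ∣ w) {n : ℕ}
    (h : X ^ n ∣ z - w) :
    coeff n (V.compSeries z) - coeff n (V.compSeries w) = coeff 1 V * (coeff n z - coeff n w) := by
  simp only [compSeries, coeff_mk, ← Finset.sum_sub_distrib, ← mul_sub]
  rw [Finset.sum_eq_single 1]
  · simp
  · intro k _ hk1
    rcases Nat.lt_or_ge k 2 with hk | hk
    · obtain rfl : k = 0 := by omega
      simp
    · rw [← map_sub, X_pow_dvd_iff.mp (X_pow_succ_dvd_pow_sub_pow hz hw h hk) n n.lt_succ_self,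
        mul_zero]
  · intro h1
    obtain rfl : n = 0 := by simpa using h1
    simp [X_dvd_iff.mp hz, X_dvd_iff.mp hw]

theorem coeff_mul_derivative_sq_sub {U z w : R⟦X⟧} (hU : X ∣ U) {n : ℕ} (h : X ^ (n + 1) ∣ z - w) :
    coeff (n + 1) (U * d⁄dX R z ^ 2) - coeff (n + 1) (U * d⁄dX R w ^ 2)
      = (n + 1) * coeff 1 U * (coeff 1 z + coeff 1 w) * (coeff (n + 1) z - coeff (n + 1) w) := by
  have hsum : coeff 1 (U * (d⁄dX R z + d⁄dX R w)) = coeff 1 U * (coeff 1 z + coeff 1 w) := by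
    rw [coeff_add_mul_of_X_pow_dvd (m := 1) (n := 0) (by rwa [pow_one]) (one_dvd _), map_add,
      coeff_derivative, coeff_derivative]
    simp
  rw [← map_sub, show U * d⁄dX R z ^ 2 - U * d⁄dX R w ^ 2
      = U * (d⁄dX R z + d⁄dX R w) * d⁄dX R (z - w) by rw [map_sub]; ring, add_comm n 1,
    coeff_add_mul_of_X_pow_dvd (by rw [pow_one]; exact hU.mul_right _) (X_pow_dvd_derivative h),
    hsum, coeff_derivative, add_comm 1 n, map_sub]
  ring

theorem X_sq_dvd_sub_C_mul_X_iff {z : R⟦X⟧} {c : R} :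
    X ^ 2 ∣ z - C c * X ↔ constantCoeff z = 0 ∧ coeff 1 z = c := by
  rw [X_pow_dvd_iff]
  constructor
  · intro h
    exact ⟨by simpa using h 0 two_pos, by simpa [sub_eq_zero] using h 1 one_lt_two⟩
  · rintro ⟨h0, h1⟩ m hm
    interval_cases m <;> simp [h0, h1]

noncomputable def odeResidual (U V z : R⟦X⟧) : R⟦X⟧ := U * d⁄dX R z ^ 2 - V.compSeries z

theorem odeResidual_zero (U : R⟦X⟧) {V : R⟦X⟧} (hV : constantCoeff V = 0) :
    odeResidual U V 0 = 0 := by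
  simp [odeResidual, compSeries_zero, hV]

theorem X_sq_dvd_odeResidual_iff {U V z : R⟦X⟧} (hU : X ∣ U) (hV : X ∣ V) :
    X ^ 2 ∣ odeResidual U V z ↔ coeff 1 z * (coeff 1 U * coeff 1 z - coeff 1 V) = 0 := by
  have h0 : coeff 0 (odeResidual U V z) = 0 := by
    simp [odeResidual, constantCoeff_compSeries, X_dvd_iff.mp hU, X_dvd_iff.mp hV]
  have h1 : coeff 1 (odeResidual U V z) = coeff 1 z * (coeff 1 U * coeff 1 z - coeff 1 V) := by
    rw [odeResidual, map_sub, coeff_one_compSeries,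
      coeff_add_mul_of_X_pow_dvd (m := 1) (n := 0) (by rwa [pow_one]) (one_dvd _),
      coeff_zero_eq_constantCoeff_apply, map_pow, ← coeff_zero_eq_constantCoeff_apply,
      coeff_derivative, zero_add, Nat.cast_zero, zero_add, mul_one]
    ring
  rw [X_pow_dvd_iff]
  refine ⟨fun h => h1 ▸ h 1 one_lt_two, fun h m hm => ?_⟩
  interval_cases m
  exacts [h0, h1.trans h]

theorem coeff_odeResidual_sub {U V z w : R⟦X⟧} {c : R} (hU : X ∣ U) (hz : X ^ 2 ∣ z - C c * X)
    {n : ℕ} (hn : 2 ≤ n) (h : X ^ n ∣ z - w) :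
    coeff n (odeResidual U V z) - coeff n (odeResidual U V w)
      = (2 * n * coeff 1 U * c - coeff 1 V) * (coeff n z - coeff n w) := by
  have hw : X ^ 2 ∣ w - C c * X := by
    convert dvd_sub hz ((pow_dvd_pow X hn).trans h) using 1
    ring
  obtain ⟨hz0, hz1⟩ := X_sq_dvd_sub_C_mul_X_iff.mp hz
  obtain ⟨hw0, hw1⟩ := X_sq_dvd_sub_C_mul_X_iff.mp hw
  obtain ⟨m, rfl⟩ : ∃ m, n = m + 1 := ⟨n - 1, by omega⟩
  rw [odeResidual, odeResidual, map_sub, map_sub, sub_sub_sub_comm,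
    coeff_mul_derivative_sq_sub hU h,
    coeff_compSeries_sub (X_dvd_iff.mpr hz0) (X_dvd_iff.mpr hw0) h, hz1, hw1]
  push_cast
  ring

end CommRing

section NoZeroDivisors

variable {R : Type*} [CommRing R] [NoZeroDivisors R]

theorem eq_of_coeff_sub_eq_mul
    (F : R⟦X⟧ → R⟦X⟧) (N : ℕ) (z₀ : R⟦X⟧) (diag : ℕ → R) (hdiag : ∀ n, N ≤ n → diag n ≠ 0)
    (hF : ∀ z w n, N ≤ n → X ^ N ∣ z - z₀ → X ^ n ∣ z - w →
      coeff n (F z) - coeff n (F w) = diag n * (coeff n z - coeff n w))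
    {z w : R⟦X⟧} (hz : X ^ N ∣ z - z₀) (hw : X ^ N ∣ w - z₀) (hzw : F z = F w) : z = w := by
  have hdvd : ∀ n, N ≤ n → X ^ n ∣ z - w := by
    refine Nat.le_induction (by simpa using dvd_sub hz hw) fun n hn ih => ?_
    refine X_pow_succ_dvd_of_coeff_eq_zero ih ?_
    have := hF z w n hn hz ih
    rw [hzw, sub_self, eq_comm, mul_eq_zero] at this
    rw [map_sub]
    exact this.resolve_left (hdiag n hn)
  rw [← sub_eq_zero]
  ext n
  simpa using X_pow_dvd_iff.mp (hdvd (max N (n + 1)) (le_max_left _ _)) n (by omega)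

theorem eq_of_odeResidual_eq_zero {U V : R⟦X⟧} {c : R} (hU : X ∣ U)
    (hdiag : ∀ n : ℕ, 2 ≤ n → 2 * n * coeff 1 U * c - coeff 1 V ≠ 0) {z w : R⟦X⟧}
    (hz : X ^ 2 ∣ z - C c * X) (hw : X ^ 2 ∣ w - C c * X) (hFz : odeResidual U V z = 0)
    (hFw : odeResidual U V w = 0) : z = w :=
  eq_of_coeff_sub_eq_mul (odeResidual U V) 2 (C c * X) _ hdiag
    (fun _ _ _ hn hz h => coeff_odeResidual_sub hU hz hn h) hz hw (hFz.trans hFw.symm)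

end NoZeroDivisors

section Field

variable {K : Type*} [Field K]

/-- Under the hypotheses of `exists_of_coeff_sub_eq_mul`,
`coeff n (F z) = coeff n (F w) + diag n * coeff n z` for the truncation `w` of `z` below `n ≥ N`,
so the `n`-th coefficient below is the one that makes `coeff n (F z)` vanish. -/
noncomputable def solveCoeff (F : K⟦X⟧ → K⟦X⟧) (N : ℕ) (z₀ : K⟦X⟧) (diag : ℕ → K) : ℕ → K
  | n => if n < N then coeff n z₀ else
      -coeff n (F (mk fun k => if k < n then solveCoeff F N z₀ diag k else 0)) / diag n

theorem exists_of_coeff_sub_eq_mul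
    (F : K⟦X⟧ → K⟦X⟧) (N : ℕ) (z₀ : K⟦X⟧) (diag : ℕ → K) (hdiag : ∀ n, N ≤ n → diag n ≠ 0)
    (hF : ∀ z w n, N ≤ n → X ^ N ∣ z - z₀ → X ^ n ∣ z - w →
      coeff n (F z) - coeff n (F w) = diag n * (coeff n z - coeff n w))
    (hlow : ∀ z, X ^ N ∣ z - z₀ → X ^ N ∣ F z) :
    ∃ z, X ^ N ∣ z - z₀ ∧ F z = 0 := by
  have hc (n : ℕ) : solveCoeff F N z₀ diag n = if n < N then coeff n z₀ else
      -coeff n (F (mk fun k => if k < n then solveCoeff F N z₀ diag k else 0)) / diag n := by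
    rw [solveCoeff]
  set c := solveCoeff F N z₀ diag
  set z := mk c
  have hz : X ^ N ∣ z - z₀ := by
    refine X_pow_dvd_iff.mpr fun m hm => ?_
    rw [map_sub, coeff_mk, hc, if_pos hm, sub_self]
  refine ⟨z, hz, ?_⟩
  ext n
  rw [map_zero]
  rcases Nat.lt_or_ge n N with hn | hn
  · exact X_pow_dvd_iff.mp (hlow z hz) n hn
  set w : K⟦X⟧ := mk fun k => if k < n then c k else 0
  have hzw : X ^ n ∣ z - w := X_pow_dvd_iff.mpr fun m hm => by simp [z, w, hm]
  have hcn : c n = -coeff n (F w) / diag n := by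
    rw [hc, if_neg (by omega)]
  have := hF z w n hn hz hzw
  rw [show coeff n z = c n from coeff_mk _ _, show coeff n w = 0 by simp [w], sub_zero, hcn,
    mul_div_cancel₀ _ (hdiag n hn)] at this
  linear_combination this

variable {U V : K⟦X⟧} {c : K}

theorem exists_odeResidual_eq_zero (hU : X ∣ U) (hV : X ∣ V) (hc : coeff 1 U * c = coeff 1 V)
    (hdiag : ∀ n : ℕ, 2 ≤ n → 2 * n * coeff 1 U * c - coeff 1 V ≠ 0) :
    ∃ z, X ^ 2 ∣ z - C c * X ∧ odeResidual U V z = 0 := by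
  refine exists_of_coeff_sub_eq_mul (odeResidual U V) 2 (C c * X) _ hdiag
    (fun _ _ _ hn hz h => coeff_odeResidual_sub hU hz hn h) fun z hz => ?_
  rw [X_sq_dvd_odeResidual_iff hU hV, (X_sq_dvd_sub_C_mul_X_iff.mp hz).2, hc, sub_self, mul_zero]

end Field

end PowerSeries

/-- If `U` and `V` are formal power series of `t`-adic valuation `1` over a field of
characteristic zero, the differential equation `U · (z')² = V ∘ z` has a unique nonzero
solution `z ∈ t·K⟦t⟧`. -/
theorem existsUnique_nonzero_solution {K : Type*} [Field K] [CharZero K]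
    (U V : PowerSeries K)
    (hU0 : constantCoeff U = 0) (hU1 : coeff 1 U ≠ 0)
    (hV0 : constantCoeff V = 0) (hV1 : coeff 1 V ≠ 0) :
    ∃! z : PowerSeries K, z ≠ 0 ∧ constantCoeff z = 0 ∧
      U * (d⁄dX K z) ^ 2 = V.compSeries z := by
  have hU : X ∣ U := X_dvd_iff.mpr hU0
  have hV : X ∣ V := X_dvd_iff.mpr hV0
  set c := coeff 1 V / coeff 1 U
  have hc : coeff 1 U * c = coeff 1 V := mul_div_cancel₀ _ hU1
  have hdiag (n : ℕ) (hn : 2 ≤ n) : 2 * n * coeff 1 U * c - coeff 1 V ≠ 0 := by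
    rw [show 2 * n * coeff 1 U * c - coeff 1 V = (2 * n - 1) * coeff 1 V by
      linear_combination 2 * (n : K) * hc]
    exact mul_ne_zero (sub_ne_zero.mpr (by exact_mod_cast (by omega : 2 * n ≠ 1))) hV1
  obtain ⟨z, hz, hFz⟩ := exists_odeResidual_eq_zero hU hV hc hdiag
  obtain ⟨hz0, hz1⟩ := X_sq_dvd_sub_C_mul_X_iff.mp hz
  refine ⟨z, ⟨?_, hz0, sub_eq_zero.mp hFz⟩, fun y ⟨hy, hy0, hyeq⟩ => ?_⟩
  · rintro rfl
    exact div_ne_zero hV1 hU1 (hz1.symm.trans (map_zero _))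
  have hFy : odeResidual U V y = 0 := sub_eq_zero.mpr hyeq
  rcases mul_eq_zero.mp ((X_sq_dvd_odeResidual_iff hU hV).mp (hFy ▸ dvd_zero _)) with hy1 | hy1
  · have h0 : X ^ 2 ∣ (0 : K⟦X⟧) - C 0 * X := by simp
    exact absurd (eq_of_odeResidual_eq_zero hU (fun _ _ => by simpa using hV1)
      (X_sq_dvd_sub_C_mul_X_iff.mpr ⟨hy0, hy1⟩) h0 hFy (odeResidual_zero U hV0)) hy
  · refine eq_of_odeResidual_eq_zero hU hdiag ?_ hz hFy hFz
    exact X_sq_dvd_sub_C_mul_X_iff.mpr ⟨hy0, (eq_div_iff hU1).mpr (by linear_combination hy1)⟩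
end

section
/- Let K be a finite extension of ℚ₂, a ∈ O_K^×, f = Σ f_i t^i ∈ K⟦t⟧, and let y = Σ y_i t^i be the unique solution of t(t−4a)·y' + (t−2a)·y = f. Then for every i ≥ 0, v_2(y_i) ≥ min_{0 ≤ k ≤ i} v_2(f_k) − ⌊log_2(i+1)⌋ − 1. -/
/-!
Comparing coefficients turns the equation into `f₀ = -2a·y₀` and
`f_{n+1} = (n+1)·y_n - 2a(2n+3)·y_{n+1}`. Since `2n+3` is odd, solving for `y_{n+1}` costs exactly
one unit of valuation, while the factor `n+1` in front of `y_n` gives back `v₂(n+1)`. Legendre's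
formula `s(n+1) + v₂(n+1) = s(n) + 1` for the binary digit sum `s` makes
`min_{k ≤ i} (v(f_k) + s(k)) ≤ v(y_i) + s(i) + 1` an invariant of the recursion, and
`2 ^ s(i) ≤ i + 1` bounds `s(i)` by `⌊log₂(i+1)⌋`.
-/

open PowerSeries

namespace Nat

theorem two_pow_digits_sum_le_succ (n : ℕ) : 2 ^ (digits 2 n).sum ≤ n + 1 := by
  induction n using Nat.strong_induction_on with
  | _ n ih =>
    rcases Nat.eq_zero_or_pos n with rfl | hn
    · simp
    have hq := ih (n / 2) (Nat.div_lt_self hn one_lt_two)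
    rw [digits_def' one_lt_two hn, List.sum_cons, pow_add]
    rcases Nat.mod_two_eq_zero_or_one n with h | h <;> rw [h] <;> omega

theorem digits_sum_le_log_succ (n : ℕ) : (digits 2 n).sum ≤ log 2 (n + 1) :=
  (le_log_iff_pow_le one_lt_two n.succ_ne_zero).mpr (two_pow_digits_sum_le_succ n)

theorem digits_sum_succ_add_padicValNat (n : ℕ) :
    (digits 2 (n + 1)).sum + padicValNat 2 (n + 1) = (digits 2 n).sum + 1 := by
  have := Fact.mk prime_two
  have hsucc := sub_one_mul_padicValNat_factorial (p := 2) (n + 1)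
  have hn := sub_one_mul_padicValNat_factorial (p := 2) n
  rw [factorial_succ, padicValNat.mul n.add_one_ne_zero (factorial_ne_zero n)] at hsucc
  simp only [show 2 - 1 = 1 from rfl, one_mul] at hsucc hn
  have := digit_sum_le 2 (n + 1)
  have := digit_sum_le 2 n
  omega

end Nat

namespace AddValuation

variable {R Γ₀ : Type*} [Ring R] [LinearOrderedAddCommMonoidWithTop Γ₀] (v : AddValuation R Γ₀)

theorem map_natCast_nonneg (n : ℕ) : 0 ≤ v (n : R) := by
  induction n with
  | zero => simp
  | succ n ih => exact Nat.cast_succ (R := R) n ▸ v.map_le_add ih v.map_one.ge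

theorem nsmul_le_map_natCast_of_pow_dvd {p e n : ℕ} (h : p ^ e ∣ n) : e • v p ≤ v (n : R) := by
  obtain ⟨m, rfl⟩ := h
  rw [Nat.cast_mul, Nat.cast_pow, v.map_mul, v.map_pow]
  exact le_add_of_nonneg_right (v.map_natCast_nonneg m)

theorem map_natCast_odd (h2 : 0 < v 2) (n : ℕ) : v ((2 * n + 1 : ℕ) : R) = 0 := by
  have h : v 1 < v (2 * n : R) := by
    rw [v.map_one, v.map_mul]
    exact h2.trans_le (le_add_of_nonneg_right (v.map_natCast_nonneg n))
  rw [Nat.cast_succ, Nat.cast_mul, Nat.cast_two, v.map_add_eq_of_lt_right h, v.map_one]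

end AddValuation

section Coefficients

variable {R : Type*} [CommRing R] (a : R) (y : R⟦X⟧)

private theorem ode_operator_eq :
    X * (X - C (4 * a)) * d⁄dX R y + (X - C (2 * a)) * y =
      X * (X * d⁄dX R y + y) - C (4 * a) * (X * d⁄dX R y) - C (2 * a) * y := by
  ring

theorem coeff_zero_ode_operator :
    coeff 0 (X * (X - C (4 * a)) * d⁄dX R y + (X - C (2 * a)) * y) = -(2 * a * coeff 0 y) := by
  rw [ode_operator_eq]
  simp only [map_sub, coeff_C_mul, coeff_zero_X_mul]
  ring

theorem coeff_succ_ode_operator (n : ℕ) :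
    coeff (n + 1) (X * (X - C (4 * a)) * d⁄dX R y + (X - C (2 * a)) * y) =
      (n + 1) * coeff n y - 2 * a * (2 * n + 3) * coeff (n + 1) y := by
  rw [ode_operator_eq]
  rcases n with _ | n <;>
    simp only [map_sub, map_add, coeff_C_mul, coeff_succ_X_mul, coeff_derivative,
      coeff_zero_X_mul] <;>
    push_cast <;> ring

end Coefficients

section Valuation

variable {R : Type*} [CommRing R] (v : AddValuation R (WithTop ℚ)) (hv2 : v 2 = (1 : ℚ))
  {a : R} (ha : v a = (0 : ℚ)) {f y : R⟦X⟧}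
  (hy : X * (X - C (4 * a)) * d⁄dX R y + (X - C (2 * a)) * y = f)

include hv2 ha hy

theorem valuation_coeff_zero_of_ode : v (coeff 0 f) = v (coeff 0 y) + 1 := by
  rw [← hy, coeff_zero_ode_operator, v.map_neg, v.map_mul, v.map_mul, hv2, ha]
  norm_num [add_comm]

theorem min_le_valuation_coeff_succ_of_ode (n : ℕ) :
    min (v (coeff n y) + padicValNat 2 (n + 1)) (v (coeff (n + 1) f)) ≤
      v (coeff (n + 1) y) + 1 := by
  have hodd : v (2 * (n : R) + 3) = 0 := by
    rw [show 2 * (n : R) + 3 = ((2 * (n + 1) + 1 : ℕ) : R) by push_cast; ring]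
    exact v.map_natCast_odd (hv2 ▸ by norm_num) (n + 1)
  have hsolve :
      2 * a * (2 * n + 3) * coeff (n + 1) y = (n + 1) * coeff n y - coeff (n + 1) f := by
    rw [← hy, coeff_succ_ode_operator]
    ring
  have hfactor : (padicValNat 2 (n + 1) : WithTop ℚ) ≤ v ((n : R) + 1) := by
    simpa [hv2] using v.nsmul_le_map_natCast_of_pow_dvd (p := 2) (n := n + 1) pow_padicValNat_dvd
  calc min (v (coeff n y) + padicValNat 2 (n + 1)) (v (coeff (n + 1) f))
      ≤ min (v ((n + 1) * coeff n y)) (v (coeff (n + 1) f)) := by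
        rw [v.map_mul, add_comm]
        gcongr
    _ ≤ v ((n + 1) * coeff n y - coeff (n + 1) f) := v.map_sub _ _
    _ = v (coeff (n + 1) y) + 1 := by
        rw [← hsolve, v.map_mul, v.map_mul, v.map_mul, hv2, ha, hodd]
        norm_num [add_comm]

theorem inf_valuation_add_digits_sum_le (i : ℕ) :
    (Finset.range (i + 1)).inf (fun k => v (coeff k f) + (Nat.digits 2 k).sum) ≤
      v (coeff i y) + ((Nat.digits 2 i).sum + 1) := by
  induction i with
  | zero =>
    rw [zero_add, Finset.range_one, Finset.inf_singleton, valuation_coeff_zero_of_ode v hv2 ha hy]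
    simp
  | succ n ih =>
    rw [Finset.range_add_one, Finset.inf_insert]
    calc _ ≤ min (v (coeff n y) + ((Nat.digits 2 n).sum + 1))
            (v (coeff (n + 1) f) + (Nat.digits 2 (n + 1)).sum) := by
          rw [min_comm]
          exact min_le_min ih le_rfl
      _ = min (v (coeff n y) + padicValNat 2 (n + 1)) (v (coeff (n + 1) f)) +
            (Nat.digits 2 (n + 1)).sum := by
          have hdigits : ((Nat.digits 2 n).sum : WithTop ℚ) + 1 =
              padicValNat 2 (n + 1) + (Nat.digits 2 (n + 1)).sum := by
            rw [add_comm (padicValNat 2 (n + 1) : WithTop ℚ)]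
            exact_mod_cast (Nat.digits_sum_succ_add_padicValNat n).symm
          rw [hdigits, ← min_add_add_right, add_assoc]
      _ ≤ v (coeff (n + 1) y) + 1 + (Nat.digits 2 (n + 1)).sum := by
          gcongr
          exact min_le_valuation_coeff_succ_of_ode v hv2 ha hy n
      _ = v (coeff (n + 1) y) + ((Nat.digits 2 (n + 1)).sum + 1) := by
          rw [add_assoc, add_comm (1 : WithTop ℚ)]

end Valuation

theorem linear_ode_plus_valuation_bound_general
    {K : Type*} [Field K]
    (v : AddValuation K (WithTop ℚ)) (hv2 : v 2 = (1 : ℚ)) (a : K) (ha : v a = (0 : ℚ))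
    (f y : PowerSeries K)
    (hy : X * (X - C (4 * a)) * d⁄dX K y + (X - C (2 * a)) * y = f) :
    ∀ i : ℕ,
      (Finset.range (i + 1)).inf (fun k => v (coeff k f)) ≤
        v (coeff i y) + (((Nat.log 2 (i + 1) : ℚ) + 1 : ℚ) : WithTop ℚ) := by
  intro i
  calc (Finset.range (i + 1)).inf (fun k => v (coeff k f))
      ≤ (Finset.range (i + 1)).inf (fun k => v (coeff k f) + (Nat.digits 2 k).sum) :=
        Finset.inf_mono_fun fun k _ => le_add_of_nonneg_right (Nat.cast_nonneg' _)
    _ ≤ v (coeff i y) + ((Nat.digits 2 i).sum + 1) := inf_valuation_add_digits_sum_le v hv2 ha hy i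
    _ ≤ v (coeff i y) + (((Nat.log 2 (i + 1) : ℚ) + 1 : ℚ) : WithTop ℚ) := by
        have hs : ((Nat.digits 2 i).sum : WithTop ℚ) ≤ (Nat.log 2 (i + 1) : ℕ) := by
          exact_mod_cast Nat.digits_sum_le_log_succ i
        rw [show (((Nat.log 2 (i + 1) : ℚ) + 1 : ℚ) : WithTop ℚ) = (Nat.log 2 (i + 1) : ℕ) + 1 by
          norm_cast]
        gcongr

/-- Valuation estimate for the solution of `t(t-4a)y' + (t-2a)y = f`:
`v₂(yᵢ) ≥ min_{0 ≤ k ≤ i} v₂(f_k) - ⌊log₂(i+1)⌋ - 1`. -/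
theorem linear_ode_plus_valuation_bound
    {K : Type*} [Field K] [Algebra ℚ_[2] K] [FiniteDimensional ℚ_[2] K]
    (v : AddValuation K (WithTop ℚ)) (hv2 : v 2 = (1 : ℚ)) (a : K) (ha : v a = (0 : ℚ))
    (f y : PowerSeries K)
    (hy : X * (X - C (4 * a)) * d⁄dX K y + (X - C (2 * a)) * y = f) :
    ∀ i : ℕ,
      (Finset.range (i + 1)).inf (fun k => v (coeff k f)) ≤
        v (coeff i y) + (((Nat.log 2 (i + 1) : ℚ) + 1 : ℚ) : WithTop ℚ) :=
  linear_ode_plus_valuation_bound_general v hv2 a ha f y hy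
end

section
/- Let K be a field of characteristic zero, a ∈ K nonzero, and let ψ_+ (resp. ψ_−) denote the K-linear map on K⟦t⟧ sending f to the unique power series solution of t(t−4a)y' + (t−2a)y = f (resp. t(t−4a)y' − (t−2a)y = f). Then for all f ∈ K⟦t⟧, t(t−4a)·ψ_+(f) = ψ_−(t(t−4a)·f). -/
/-!
With `q = t(t - 4a)` one has `q' = 2(t - 2a)`, so the Leibniz rule gives
`q (qy)' - (t - 2a)(qy) = q (q y' + (t - 2a) y)`: multiplication by `q` carries the `ψ₊`-equation
with right-hand side `f` to the `ψ₋`-equation with right-hand side `q f`. The claim then follows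
from uniqueness for the `ψ₋`-equation: comparing coefficients of `t^(n+1)` in
`t(t - 4a) w' - (t - 2a) w` gives `(n - 1) wₙ - 2a(2n + 1) wₙ₊₁`, and `2a(2n + 1) ≠ 0`.
-/

open PowerSeries

namespace PowerSeries

section CommRing

variable {R : Type*} [CommRing R]

theorem coeff_X_mul_derivative (f : R⟦X⟧) (n : ℕ) :
    coeff n (X * d⁄dX R f) = n * coeff n f := by
  cases n with
  | zero => simp
  | succ m =>
    rw [coeff_succ_X_mul, coeff_derivative]
    push_cast
    ring

theorem derivative_X_mul_X_sub_C_four_mul (a : R) :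
    d⁄dX R (X * (X - C (4 * a))) = 2 * (X - C (2 * a)) := by
  rw [Derivation.leibniz, map_sub, derivative_X, derivative_C, smul_eq_mul, smul_eq_mul,
    show (4 : R) * a = 2 * (2 * a) by ring, map_mul, map_ofNat]
  ring

theorem mul_derivative_mul_sub_mul_eq {q p : R⟦X⟧} (hq : d⁄dX R q = 2 * p) (y : R⟦X⟧) :
    q * d⁄dX R (q * y) - p * (q * y) = q * (q * d⁄dX R y + p * y) := by
  rw [Derivation.leibniz, smul_eq_mul, smul_eq_mul, hq]
  ring

theorem constantCoeff_X_mul_X_sub_C_mul_derivative_sub (a : R) (w : R⟦X⟧) :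
    constantCoeff (X * (X - C (4 * a)) * d⁄dX R w - (X - C (2 * a)) * w)
      = 2 * a * constantCoeff w := by
  simp

theorem coeff_succ_X_mul_X_sub_C_mul_derivative_sub (a : R) (w : R⟦X⟧) (n : ℕ) :
    coeff (n + 1) (X * (X - C (4 * a)) * d⁄dX R w - (X - C (2 * a)) * w)
      = (n - 1) * coeff n w - 2 * a * (2 * n + 1) * coeff (n + 1) w := by
  have hexpand : X * (X - C (4 * a)) * d⁄dX R w - (X - C (2 * a)) * w
      = X * (X * d⁄dX R w) - C (4 * a) * (X * d⁄dX R w) - X * w + C (2 * a) * w := by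
    ring
  rw [hexpand]
  simp only [map_sub, map_add, coeff_C_mul, coeff_X_mul_derivative]
  simp only [coeff_succ_X_mul, coeff_X_mul_derivative]
  push_cast
  ring

end CommRing

variable {R : Type*} [CommRing R] [IsDomain R] [CharZero R]

theorem eq_zero_of_X_mul_X_sub_C_mul_derivative_sub_eq_zero {a : R} (ha : a ≠ 0) {w : R⟦X⟧}
    (h : X * (X - C (4 * a)) * d⁄dX R w - (X - C (2 * a)) * w = 0) : w = 0 := by
  ext n
  induction n with
  | zero =>
    have h0 := congrArg constantCoeff h
    rw [constantCoeff_X_mul_X_sub_C_mul_derivative_sub, map_zero] at h0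
    simpa [ha] using h0
  | succ n ih =>
    have hn := congrArg (coeff (n + 1)) h
    rw [map_zero] at ih ⊢
    rw [coeff_succ_X_mul_X_sub_C_mul_derivative_sub, ih, map_zero] at hn
    have hodd : (2 * n + 1 : R) ≠ 0 := by exact_mod_cast (2 * n).succ_ne_zero
    simpa [ha, hodd] using hn

end PowerSeries

/-- Intertwining relation between the solution operators `ψ₊` and `ψ₋`:
if `y₊` solves `t(t-4a)y' + (t-2a)y = f` and `y₋` solves
`t(t-4a)y' - (t-2a)y = t(t-4a)·f`, then `t(t-4a)·y₊ = y₋`. -/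
theorem psi_plus_psi_minus_intertwine
    {K : Type*} [Field K] [CharZero K] (a : K) (ha : a ≠ 0)
    (f yplus yminus : PowerSeries K)
    (hplus : X * (X - C (R := K) (4 * a)) * d⁄dX K yplus + (X - C (R := K) (2 * a)) * yplus = f)
    (hminus : X * (X - C (R := K) (4 * a)) * d⁄dX K yminus - (X - C (R := K) (2 * a)) * yminus
      = X * (X - C (R := K) (4 * a)) * f) :
    X * (X - C (R := K) (4 * a)) * yplus = yminus := by
  have hmul := mul_derivative_mul_sub_mul_eq (derivative_X_mul_X_sub_C_four_mul a) yplus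
  rw [hplus] at hmul
  refine sub_eq_zero.mp (eq_zero_of_X_mul_X_sub_C_mul_derivative_sub_eq_zero ha ?_)
  rw [map_sub]
  linear_combination hmul - hminus
end

section
/- Newton iteration for the nonlinear equation: let K be a field of characteristic zero, U = t(t−4a)u(t)² with u(0) ≠ 0, V ∈ K⟦t⟧ of t-adic valuation 1, and let z_m ∈ t·K⟦t⟧ with z_m'(0) ≠ 0 satisfy U·(z_m')² ≡ V(z_m) mod t^m for some m > 1. Then z_m + z_m'·u·ψ_−( (1/(2u³))·(V(z_m)/(z_m')² − U) ) satisfies the equation U·(z')² ≡ V(z) mod t^{2m−1}. -/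
/-!
Let `E(z) = U z'² - V(z)`. Comparing `V(z)` with the compositions of the polynomial
truncations of `V` yields the chain rule and a second-order Taylor formula for `V(z)`; hence,
when `t ∣ U` and `tᵐ ∣ w`, `E(z + w)` agrees modulo `t^(2m-1)` with the linearisation
`E(z) + 2 U z' w' - V'(z) w`. For `w = z' u y` with `ψ₋⁻¹ y = -E(z) / (2 u³ z'²)` this
linearisation equals `u y E(z)'`: the factor `t - 2a` of `ψ₋⁻¹` is what the logarithmic
derivative of `U = t(t-4a)u²` produces. Finally `t^(m-1) ∣ E(z)'`, and `tᵐ ∣ y` because the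
coefficient recursion of `ψ₋⁻¹` has the nonvanishing leading factors `2a(2n+1)`.
-/

open PowerSeries

namespace PowerSeries

variable {R : Type*} [CommRing R]

theorem eq_zero_of_forall_X_pow_dvd {f : R⟦X⟧} (h : ∀ n, (X : R⟦X⟧) ^ n ∣ f) : f = 0 :=
  ext fun n => X_pow_dvd_iff.1 (h (n + 1)) n n.lt_succ_self

theorem X_pow_sub_one_dvd_derivative {m : ℕ} {f : R⟦X⟧} (h : X ^ m ∣ f) :
    X ^ (m - 1) ∣ d⁄dX R f := by
  obtain ⟨g, rfl⟩ := h
  rw [Derivation.leibniz, derivative_pow, derivative_X, smul_eq_mul, smul_eq_mul]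
  exact dvd_add (dvd_mul_of_dvd_left (pow_dvd_pow X (m.sub_le 1)) _)
    (dvd_mul_of_dvd_right (dvd_mul_of_dvd_left (dvd_mul_left _ _) _) _)

theorem coeff_pow_eq_zero_of_lt {z : R⟦X⟧} (hz : constantCoeff z = 0) {n k : ℕ} (h : n < k) :
    coeff n (z ^ k) = 0 :=
  X_pow_dvd_iff.1 (pow_dvd_pow_of_dvd (X_dvd_iff.2 hz) k) n h

theorem X_pow_dvd_compSeries_sub_aeval_trunc (V : R⟦X⟧) {z : R⟦X⟧}
    (hz : constantCoeff z = 0) (N : ℕ) :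
    X ^ N ∣ V.compSeries z - Polynomial.aeval z (trunc N V) := by
  rw [X_pow_dvd_iff]
  intro n hn
  simp only [trunc_apply, map_sum, Polynomial.aeval_monomial, algebraMap_eq, map_sub,
    coeff_C_mul, compSeries, coeff_mk, Nat.Ico_zero_eq_range, sub_eq_zero]
  refine Finset.sum_subset (Finset.range_subset_range.2 hn) fun k _ hk => ?_
  rw [coeff_pow_eq_zero_of_lt hz (by simpa using hk), mul_zero]

theorem derivative_compSeries (V : R⟦X⟧) {z : R⟦X⟧} (hz : constantCoeff z = 0) :
    d⁄dX R (V.compSeries z) = (d⁄dX R V).compSeries z * d⁄dX R z := by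
  refine sub_eq_zero.1 (eq_zero_of_forall_X_pow_dvd fun N => ?_)
  have htrunc := X_pow_dvd_compSeries_sub_aeval_trunc V hz (N + 1)
  have htrunc' := X_pow_dvd_compSeries_sub_aeval_trunc (d⁄dX R V) hz N
  have hchain := (d⁄dX R).comp_aeval_eq z (trunc (N + 1) V)
  rw [← trunc_derivative, smul_eq_mul] at hchain
  have key : d⁄dX R (V.compSeries z) - (d⁄dX R V).compSeries z * d⁄dX R z =
      d⁄dX R (V.compSeries z - Polynomial.aeval z (trunc (N + 1) V)) -
        ((d⁄dX R V).compSeries z - Polynomial.aeval z (trunc N (d⁄dX R V))) * d⁄dX R z := by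
    rw [map_sub, hchain]; ring
  rw [key]
  exact dvd_sub (X_pow_sub_one_dvd_derivative htrunc) (dvd_mul_of_dvd_left htrunc' _)

theorem X_pow_dvd_compSeries_add_sub (V : R⟦X⟧) {z w : R⟦X⟧} (hz : constantCoeff z = 0)
    {m : ℕ} (hw : X ^ m ∣ w) :
    X ^ (2 * m) ∣ V.compSeries (z + w) - V.compSeries z - (d⁄dX R V).compSeries z * w := by
  rcases Nat.eq_zero_or_pos m with rfl | hm
  · simp
  have hzw : constantCoeff (z + w) = 0 :=
    X_dvd_iff.1 (dvd_add (X_dvd_iff.2 hz) ((dvd_pow_self X hm.ne').trans hw))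
  set P := trunc (2 * m) V
  obtain ⟨k, hk⟩ := (P.map (algebraMap R R⟦X⟧)).binomExpansion z w
  simp only [Polynomial.eval_map_algebraMap, Polynomial.derivative_map] at hk
  rw [← trunc_derivative'] at hk
  have key : V.compSeries (z + w) - V.compSeries z - (d⁄dX R V).compSeries z * w =
      (V.compSeries (z + w) - Polynomial.aeval (z + w) P) - (V.compSeries z - Polynomial.aeval z P)
        - ((d⁄dX R V).compSeries z - Polynomial.aeval z (trunc (2 * m - 1) (d⁄dX R V))) * w
        + k * w ^ 2 := by
    rw [hk]; ring
  rw [key]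
  refine dvd_add (dvd_sub (dvd_sub ?_ ?_) ?_) (dvd_mul_of_dvd_right ?_ _)
  · exact X_pow_dvd_compSeries_sub_aeval_trunc V hzw _
  · exact X_pow_dvd_compSeries_sub_aeval_trunc V hz _
  · have h := mul_dvd_mul (X_pow_dvd_compSeries_sub_aeval_trunc (d⁄dX R V) hz (2 * m - 1)) hw
    rw [← pow_add] at h
    exact (pow_dvd_pow X (by omega)).trans h
  · rw [two_mul, pow_add, sq]
    exact mul_dvd_mul hw hw

/-- The paper's `ψ₋` is the inverse of this operator. -/
noncomputable def psiOp (a : R) (y : R⟦X⟧) : R⟦X⟧ :=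
  X * (X - C (4 * a)) * d⁄dX R y - (X - C (2 * a)) * y

theorem psiOp_eq (a : R) (y : R⟦X⟧) : psiOp a y =
    X * (X * d⁄dX R y) - C (4 * a) * (X * d⁄dX R y) - X * y + C (2 * a) * y := by
  rw [psiOp]; ring

theorem coeff_zero_psiOp (a : R) (y : R⟦X⟧) : coeff 0 (psiOp a y) = 2 * a * coeff 0 y := by
  simp [psiOp_eq]

theorem coeff_succ_psiOp (a : R) (y : R⟦X⟧) (n : ℕ) :
    coeff (n + 1) (psiOp a y) = (n - 1) * coeff n y - 2 * a * (2 * n + 1) * coeff (n + 1) y := by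
  simp only [psiOp_eq, map_add, map_sub, coeff_C_mul, coeff_X_mul_derivative]
  rw [coeff_succ_X_mul, coeff_succ_X_mul, coeff_X_mul_derivative]
  push_cast; ring

theorem X_pow_dvd_of_X_pow_dvd_psiOp [IsDomain R] [CharZero R] {a : R} (ha : a ≠ 0)
    {y : R⟦X⟧} {m : ℕ} (h : X ^ m ∣ psiOp a y) : X ^ m ∣ y := by
  rw [X_pow_dvd_iff] at h ⊢
  intro n hn
  induction n with
  | zero =>
    have h0 := h 0 hn
    rw [coeff_zero_psiOp] at h0
    exact (mul_eq_zero.1 h0).resolve_left (mul_ne_zero two_ne_zero ha)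
  | succ n ih =>
    have hn1 := h (n + 1) hn
    rw [coeff_succ_psiOp, ih (by omega), mul_zero, zero_sub, neg_eq_zero] at hn1
    have hodd : (2 * n + 1 : R) ≠ 0 := by exact_mod_cast (2 * n).succ_ne_zero
    exact (mul_eq_zero.1 hn1).resolve_left (mul_ne_zero (mul_ne_zero two_ne_zero ha) hodd)

noncomputable def newtonDefect (U V z : R⟦X⟧) : R⟦X⟧ :=
  U * (d⁄dX R z) ^ 2 - V.compSeries z

noncomputable def newtonLinearization (U V z w : R⟦X⟧) : R⟦X⟧ :=
  2 * U * d⁄dX R z * d⁄dX R w - (d⁄dX R V).compSeries z * w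

theorem X_pow_dvd_newtonDefect_add_sub (V : R⟦X⟧) {U z w : R⟦X⟧} (hU : X ∣ U)
    (hz : constantCoeff z = 0) {m : ℕ} (hw : X ^ m ∣ w) :
    X ^ (2 * m - 1) ∣
      newtonDefect U V (z + w) - (newtonDefect U V z + newtonLinearization U V z w) := by
  have key : newtonDefect U V (z + w) - (newtonDefect U V z + newtonLinearization U V z w) =
      U * (d⁄dX R w) ^ 2 -
        (V.compSeries (z + w) - V.compSeries z - (d⁄dX R V).compSeries z * w) := by
    rw [newtonDefect, newtonDefect, newtonLinearization, map_add]; ring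
  rw [key]
  have hw' := X_pow_sub_one_dvd_derivative hw
  have hUw : X ^ (1 + ((m - 1) + (m - 1))) ∣ U * (d⁄dX R w) ^ 2 := by
    rw [pow_add, pow_add, pow_one, sq]
    exact mul_dvd_mul hU (mul_dvd_mul hw' hw')
  exact dvd_sub ((pow_dvd_pow X (by omega)).trans hUw)
    ((pow_dvd_pow X ((2 * m).sub_le 1)).trans (X_pow_dvd_compSeries_add_sub V hz hw))

theorem newtonDefect_add_newtonLinearization {a : R} {U u V z y : R⟦X⟧}
    (hU : U = X * (X - C (4 * a)) * u ^ 2) (hz : constantCoeff z = 0)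
    (hy : 2 * u ^ 3 * (d⁄dX R z) ^ 2 * psiOp a y = -newtonDefect U V z) :
    newtonDefect U V z + newtonLinearization U V z (d⁄dX R z * u * y) =
      u * y * d⁄dX R (newtonDefect U V z) := by
  have hC : (C (4 * a) : R⟦X⟧) = 2 * C (2 * a) := by
    rw [← map_ofNat C 2, ← map_mul, ← mul_assoc]; norm_num
  rw [newtonDefect, psiOp] at hy
  simp only [newtonDefect, newtonLinearization, map_sub, derivative_compSeries V hz,
    Derivation.leibniz, derivative_pow, derivative_X, derivative_C, smul_eq_mul, hU] at hy ⊢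
  push_cast
  linear_combination hy + u ^ 3 * (d⁄dX R z) ^ 2 * y * hC

end PowerSeries

theorem newton_iteration_step_general
    {K : Type*} [Field K] [CharZero K] (a : K) (ha : a ≠ 0)
    (u V z y : PowerSeries K) (m : ℕ)
    (hu : constantCoeff u ≠ 0)
    (hz0 : constantCoeff z = 0) (hz1 : constantCoeff (d⁄dX K z) ≠ 0)
    (happrox : X ^ m ∣
      (X * (X - C (4 * a)) * u ^ 2) * (d⁄dX K z) ^ 2 - V.compSeries z)
    (hy : X * (X - C (4 * a)) * d⁄dX K y - (X - C (2 * a)) * y =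
      (C 2 * u ^ 3)⁻¹ *
        (V.compSeries z * ((d⁄dX K z)⁻¹) ^ 2 - X * (X - C (4 * a)) * u ^ 2)) :
    X ^ (2 * m - 1) ∣
      (X * (X - C (4 * a)) * u ^ 2) * (d⁄dX K (z + d⁄dX K z * u * y)) ^ 2 -
        V.compSeries (z + d⁄dX K z * u * y) := by
  set z' := d⁄dX K z
  set U := X * (X - C (4 * a)) * u ^ 2 with hU
  change X ^ m ∣ newtonDefect U V z at happrox
  change X ^ (2 * m - 1) ∣ newtonDefect U V (z + z' * u * y)
  have hz'inv : z' * z'⁻¹ = 1 := PowerSeries.mul_inv_cancel _ hz1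
  have hu3inv : C 2 * u ^ 3 * (C 2 * u ^ 3)⁻¹ = 1 :=
    PowerSeries.mul_inv_cancel _ (by simp [hu])
  have hpsi : psiOp a y = -((C 2 * u ^ 3)⁻¹ * z'⁻¹ ^ 2) * newtonDefect U V z := by
    rw [psiOp, hy, newtonDefect]
    linear_combination ((C 2 * u ^ 3)⁻¹ * U * (z' * z'⁻¹ + 1)) * hz'inv
  have hLy : 2 * u ^ 3 * z' ^ 2 * psiOp a y = -newtonDefect U V z := by
    rw [hpsi, ← map_ofNat C 2]
    linear_combination (-newtonDefect U V z * (z' * z'⁻¹) ^ 2) * hu3inv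
      - newtonDefect U V z * (z' * z'⁻¹ + 1) * hz'inv
  have hy_dvd : X ^ m ∣ y := X_pow_dvd_of_X_pow_dvd_psiOp ha (hpsi ▸ happrox.mul_left _)
  have hXU : X ∣ U := (dvd_mul_right X _).mul_right _
  have hlin := X_pow_dvd_newtonDefect_add_sub V hXU hz0 (hy_dvd.mul_left (z' * u))
  rw [newtonDefect_add_newtonLinearization hU hz0 hLy] at hlin
  have hcorr : X ^ (2 * m - 1) ∣ u * y * d⁄dX K (newtonDefect U V z) := by
    have h := mul_dvd_mul (hy_dvd.mul_left u) (X_pow_sub_one_dvd_derivative happrox)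
    rw [← pow_add] at h
    exact (pow_dvd_pow X (by omega)).trans h
  simpa using dvd_add hlin hcorr

/-- Newton iteration: if `z_m` solves `U·(z')² = V(z)` modulo `t^m` with
`U = t(t-4a)u(t)²`, then `z_m + z_m'·u·ψ₋((1/(2u³))·(V(z_m)/(z_m')² - U))` solves it
modulo `t^(2m-1)`. -/
theorem newton_iteration_step
    {K : Type*} [Field K] [CharZero K] (a : K) (ha : a ≠ 0)
    (u V z y : PowerSeries K) (m : ℕ) (hm : 1 < m)
    (hu : constantCoeff u ≠ 0)
    (hV0 : constantCoeff V = 0) (hV1 : coeff 1 V ≠ 0)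
    (hz0 : constantCoeff z = 0) (hz1 : constantCoeff (d⁄dX K z) ≠ 0)
    (happrox : X ^ m ∣
      (X * (X - C (4 * a)) * u ^ 2) * (d⁄dX K z) ^ 2 - V.compSeries z)
    (hy : X * (X - C (4 * a)) * d⁄dX K y - (X - C (2 * a)) * y =
      (C 2 * u ^ 3)⁻¹ *
        (V.compSeries z * ((d⁄dX K z)⁻¹) ^ 2 - X * (X - C (4 * a)) * u ^ 2)) :
    X ^ (2 * m - 1) ∣
      (X * (X - C (4 * a)) * u ^ 2) * (d⁄dX K (z + d⁄dX K z * u * y)) ^ 2 -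
        V.compSeries (z + d⁄dX K z * u * y) :=
  newton_iteration_step_general a ha u V z y m hu hz0 hz1 happrox hy
end
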